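/- arXiv:1005.1769 — 2 statements merged into one kernel-verified Lean document; each statement's English description precedes it below -/
import Mathlib

section
/- In the setting of the moment problem in a strip, if conditions (2.1) and (2.2) hold, then the shift operator B₀(∑ α_{m,n} x_{m,n}) = ∑ α_{m,n} x_{m,n+1} on L is well-defined, symmetric, and bounded with ‖B₀ x‖ ≤ R‖x‖ for all x in L; hence its closure B is a bounded self-adjoint operator on H with ‖B‖ ≤ R. -/
/-!
Since `⟪x_{k,l}, x_{m,n}⟫ = s_{m+k,n+l}`, the form in (2.2) evaluated at `α` equals
`R² ‖Σ α_{m,n} x_{m,n}‖² - ‖Σ α_{m,n} x_{m,n+1}‖²`. Hence `Σ α x_{m,n} ↦ Σ α x_{m,n+1}` is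
well defined and `R`-bounded on the dense subspace `L`, and extends to a bounded operator `B`
with `‖B‖ ≤ R`. Symmetry of `B₀` on `L` is the identity `s_{m+k,(n+1)+l} = s_{m+k,n+(l+1)}`,
and it passes to `B` by continuity.
-/

open Finsupp
open scoped ComplexOrder InnerProductSpace

theorem ContinuousLinearMap.isSymmetric_of_denseRange {𝕜 E ι : Type*} [RCLike 𝕜]
    [NormedAddCommGroup E] [InnerProductSpace 𝕜 E] (T : E →L[𝕜] E) {e : ι → E}
    (he : DenseRange e) (h : ∀ a b, ⟪T (e a), e b⟫_𝕜 = ⟪e a, T (e b)⟫_𝕜) :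
    (T : E →ₗ[𝕜] E).IsSymmetric := fun u v =>
  he.induction_on₂ (p := fun u v => ⟪T u, v⟫_𝕜 = ⟪u, T v⟫_𝕜)
    (isClosed_eq (by fun_prop) (by fun_prop)) h u v

section MomentStrip

variable {H : Type*} [NormedAddCommGroup H] [InnerProductSpace ℂ H]
  {s : ℕ → ℕ → ℂ} {x : ℕ × ℕ → H}

noncomputable def shiftedCombination (x : ℕ × ℕ → H) (j : ℕ) : ((ℕ × ℕ) →₀ ℂ) →ₗ[ℂ] H :=
  linearCombination ℂ fun p => x (p.1, p.2 + j)

theorem inner_shiftedCombination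
    (hs : ∀ m n k l : ℕ, ⟪x (k, l), x (m, n)⟫_ℂ = s (m + k) (n + l))
    (j k : ℕ) (α β : (ℕ × ℕ) →₀ ℂ) :
    ⟪shiftedCombination x j α, shiftedCombination x k β⟫_ℂ =
      ∑ p ∈ α.support, ∑ q ∈ β.support,
        starRingEnd ℂ (α p) * β q * s (q.1 + p.1) (q.2 + k + (p.2 + j)) := by
  simp only [shiftedCombination, linearCombination_apply, Finsupp.sum, sum_inner, inner_sum,
    inner_smul_left, inner_smul_right, hs, mul_assoc, Finset.mul_sum]
  rw [Finset.sum_comm]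
  simp only [mul_left_comm]

theorem inner_shiftedCombination_one_zero
    (hs : ∀ m n k l : ℕ, ⟪x (k, l), x (m, n)⟫_ℂ = s (m + k) (n + l))
    (α β : (ℕ × ℕ) →₀ ℂ) :
    ⟪shiftedCombination x 1 α, shiftedCombination x 0 β⟫_ℂ =
      ⟪shiftedCombination x 0 α, shiftedCombination x 1 β⟫_ℂ := by
  simp only [inner_shiftedCombination hs, add_zero, add_assoc, add_comm 1]

theorem norm_sq_shiftedCombination
    (hs : ∀ m n k l : ℕ, ⟪x (k, l), x (m, n)⟫_ℂ = s (m + k) (n + l))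
    (j : ℕ) (α : (ℕ × ℕ) →₀ ℂ) :
    ((‖shiftedCombination x j α‖ ^ 2 : ℝ) : ℂ) =
      ∑ p ∈ α.support, ∑ q ∈ α.support,
        α p * starRingEnd ℂ (α q) * s (p.1 + q.1) (p.2 + q.2 + 2 * j) := by
  have hnorm : ((‖shiftedCombination x j α‖ ^ 2 : ℝ) : ℂ) =
      ⟪shiftedCombination x j α, shiftedCombination x j α⟫_ℂ := by
    rw [inner_self_eq_norm_sq_to_K]; norm_cast
  rw [hnorm, inner_shiftedCombination hs, Finset.sum_comm]
  refine Finset.sum_congr rfl fun p _ => Finset.sum_congr rfl fun q _ => ?_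
  rw [mul_comm (starRingEnd ℂ (α q)), show p.2 + j + (q.2 + j) = p.2 + q.2 + 2 * j by ring]

theorem norm_shiftedCombination_one_le
    (hs : ∀ m n k l : ℕ, ⟪x (k, l), x (m, n)⟫_ℂ = s (m + k) (n + l))
    {R : ℝ} (hR : 0 ≤ R)
    (h22 : ∀ α : (ℕ × ℕ) →₀ ℂ,
      0 ≤ ∑ p ∈ α.support, ∑ q ∈ α.support,
        α p * (starRingEnd ℂ) (α q) *
          ((R : ℂ) ^ 2 * s (p.1 + q.1) (p.2 + q.2) - s (p.1 + q.1) (p.2 + q.2 + 2)))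
    (α : (ℕ × ℕ) →₀ ℂ) :
    ‖shiftedCombination x 1 α‖ ≤ R * ‖shiftedCombination x 0 α‖ := by
  have hgap : (((R * ‖shiftedCombination x 0 α‖) ^ 2 - ‖shiftedCombination x 1 α‖ ^ 2 : ℝ) : ℂ) =
      ∑ p ∈ α.support, ∑ q ∈ α.support,
        α p * (starRingEnd ℂ) (α q) *
          ((R : ℂ) ^ 2 * s (p.1 + q.1) (p.2 + q.2) - s (p.1 + q.1) (p.2 + q.2 + 2)) := by
    rw [Complex.ofReal_sub, mul_pow, Complex.ofReal_mul, norm_sq_shiftedCombination hs,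
      norm_sq_shiftedCombination hs, Finset.mul_sum, ← Finset.sum_sub_distrib]
    refine Finset.sum_congr rfl fun p _ => ?_
    rw [Finset.mul_sum, ← Finset.sum_sub_distrib]
    refine Finset.sum_congr rfl fun q _ => ?_
    simp only [mul_zero, mul_one, add_zero]
    push_cast
    ring
  have h := h22 α
  rw [← hgap, Complex.zero_le_real, sub_nonneg] at h
  exact (pow_le_pow_iff_left₀ (norm_nonneg _) (by positivity) two_ne_zero).mp h

theorem denseRange_shiftedCombination_zero
    (hdense : (Submodule.span ℂ (Set.range x)).topologicalClosure = ⊤) :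
    DenseRange (shiftedCombination x 0) := by
  rw [DenseRange, ← LinearMap.coe_range, shiftedCombination, range_linearCombination]
  simpa only [add_zero, Prod.mk.eta] using
    Submodule.dense_iff_topologicalClosure_eq_top.mpr hdense

end MomentStrip

theorem stmt5_general (H : Type) [NormedAddCommGroup H] [InnerProductSpace ℂ H] [CompleteSpace H]
    (R : ℝ) (hR : 0 < R) (s : ℕ → ℕ → ℂ)
    (h22 : ∀ α : (ℕ × ℕ) →₀ ℂ,
      0 ≤ ∑ p ∈ α.support, ∑ q ∈ α.support,
        α p * (starRingEnd ℂ) (α q) *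
          ((R : ℂ) ^ 2 * s (p.1 + q.1) (p.2 + q.2) - s (p.1 + q.1) (p.2 + q.2 + 2)))
    (x : ℕ × ℕ → H)
    (hs : ∀ m n k l : ℕ, (inner ℂ (x (k, l)) (x (m, n)) : ℂ) = s (m + k) (n + l))
    (hdense : (Submodule.span ℂ (Set.range x)).topologicalClosure = ⊤) :
    ∃ B : H →L[ℂ] H,
      (∀ m n : ℕ, B (x (m, n)) = x (m, n + 1)) ∧
      (∀ u v : H, (inner ℂ (B u) v : ℂ) = inner ℂ u (B v)) ∧
      IsSelfAdjoint B ∧ ‖B‖ ≤ R := by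
  have hbound := norm_shiftedCombination_one_le hs hR.le h22
  have hL := denseRange_shiftedCombination_zero hdense
  set B := (shiftedCombination x 1).extendOfNorm (shiftedCombination x 0)
  have hB : ∀ α, B (shiftedCombination x 0 α) = shiftedCombination x 1 α :=
    LinearMap.extendOfNorm_eq hL ⟨R, hbound⟩
  have hsym : (B : H →ₗ[ℂ] H).IsSymmetric := B.isSymmetric_of_denseRange hL fun α β => by
    rw [hB, hB, inner_shiftedCombination_one_zero hs]
  refine ⟨B, fun m n => ?_, hsym, B.isSelfAdjoint_iff_isSymmetric.mpr hsym,
    LinearMap.opNorm_extendOfNorm_le hL hR.le hbound⟩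
  simpa [shiftedCombination] using hB (single (m, n) 1)

/-- Under conditions (2.1) and (2.2), the shift `B₀ : x_{m,n} ↦ x_{m,n+1}` on
`L = span{x_{m,n}}` is well-defined, symmetric and bounded with `‖B₀ x‖ ≤ R ‖x‖`; hence its
closure `B` is an (everywhere defined) bounded self-adjoint operator on `H` with `‖B‖ ≤ R`. -/
theorem stmt5 (H : Type) [NormedAddCommGroup H] [InnerProductSpace ℂ H] [CompleteSpace H]
    (R : ℝ) (hR : 0 < R) (s : ℕ → ℕ → ℂ)
    (h21 : ∀ α : (ℕ × ℕ) →₀ ℂ,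
      0 ≤ ∑ p ∈ α.support, ∑ q ∈ α.support,
        α p * (starRingEnd ℂ) (α q) * s (p.1 + q.1) (p.2 + q.2))
    (h22 : ∀ α : (ℕ × ℕ) →₀ ℂ,
      0 ≤ ∑ p ∈ α.support, ∑ q ∈ α.support,
        α p * (starRingEnd ℂ) (α q) *
          ((R : ℂ) ^ 2 * s (p.1 + q.1) (p.2 + q.2) - s (p.1 + q.1) (p.2 + q.2 + 2)))
    (x : ℕ × ℕ → H)
    (hs : ∀ m n k l : ℕ, (inner ℂ (x (k, l)) (x (m, n)) : ℂ) = s (m + k) (n + l))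
    (hdense : (Submodule.span ℂ (Set.range x)).topologicalClosure = ⊤) :
    ∃ B : H →L[ℂ] H,
      (∀ m n : ℕ, B (x (m, n)) = x (m, n + 1)) ∧
      (∀ u v : H, (inner ℂ (B u) v : ℂ) = inner ℂ u (B v)) ∧
      IsSelfAdjoint B ∧ ‖B‖ ≤ R :=
  stmt5_general H R hR s h22 x hs hdense
end

section
/- Every unitary operator U on a separable complex Hilbert space can be written as a product U = KL of two conjugations K and L (antilinear involutive isometries). -/
/-!
By Zorn's lemma, `H` is the closed span of mutually orthogonal cyclic families `{Uⁿ e}`. The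
antilinear assignment `∑ aₙ Uⁿ e ↦ ∑ conj aₙ U⁻ⁿ e` preserves the Gram matrix, because
`⟪Uᵐ e, Uⁿ e⟫` depends only on `m - n`; so it is well defined and isometric, and extends by
continuity to a conjugation `L` with `L U = U⁻¹ L`. Then `K = U L` is a conjugation as well, and
`U = K L`.
-/

open scoped InnerProductSpace ComplexConjugate

variable {H : Type*} [NormedAddCommGroup H] [InnerProductSpace ℂ H]

structure IsConjugation (C : H →L⋆[ℂ] H) : Prop where
  involutive : ∀ u, C (C u) = u
  inner_map_map : ∀ u v, ⟪C u, C v⟫_ℂ = ⟪v, u⟫_ℂ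

theorem IsConjugation.comp_unitary {C : H →L⋆[ℂ] H} (hC : IsConjugation C) (U : H ≃ₗᵢ[ℂ] H)
    (hCU : ∀ u, C (U u) = U.symm (C u)) :
    IsConjugation ((U : H →L[ℂ] H).comp C) where
  involutive u := by simp [hCU, hC.involutive]
  inner_map_map u v := by simp [hC.inner_map_map]

namespace Finsupp

variable {ι : Type*}

def conjLinearCombination (g : ι → H) : (ι →₀ ℂ) →ₗ⋆[ℂ] H where
  toFun f := f.sum fun i a => conj a • g i
  map_add' f f' := sum_add_index' (by simp) (by simp [add_smul])
  map_smul' c f := by simp [sum_smul_index', smul_sum, smul_smul]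

theorem conjLinearCombination_single (g : ι → H) (i : ι) (a : ℂ) :
    conjLinearCombination g (single i a) = conj a • g i := by
  simp [conjLinearCombination]

theorem inner_conjLinearCombination {g g' : ι → H}
    (h : ∀ i j, ⟪g' i, g' j⟫_ℂ = ⟪g j, g i⟫_ℂ) (f f' : ι →₀ ℂ) :
    ⟪conjLinearCombination g' f, conjLinearCombination g' f'⟫_ℂ =
      ⟪linearCombination ℂ g f', linearCombination ℂ g f⟫_ℂ := by
  simp only [conjLinearCombination, LinearMap.coe_mk, AddHom.coe_mk, linearCombination_apply,
    Finsupp.sum_inner, Finsupp.inner_sum, inner_smul_left, inner_smul_right, h,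
    Complex.conj_conj, mul_sum]
  rw [sum_comm]
  simp only [mul_left_comm]

theorem norm_conjLinearCombination {g g' : ι → H}
    (h : ∀ i j, ⟪g' i, g' j⟫_ℂ = ⟪g j, g i⟫_ℂ) (f : ι →₀ ℂ) :
    ‖conjLinearCombination g' f‖ = ‖linearCombination ℂ g f‖ := by
  have hf := inner_conjLinearCombination h f f
  rw [inner_self_eq_norm_sq_to_K, inner_self_eq_norm_sq_to_K] at hf
  exact (pow_left_inj₀ (norm_nonneg _) (norm_nonneg _) two_ne_zero).mp (by exact_mod_cast hf)

end Finsupp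

section Extension

variable [CompleteSpace H] {ι : Type*}

theorem exists_conjLinear_apply_eq_of_inner_eq {g g' : ι → H}
    (hg : Dense (Submodule.span ℂ (Set.range g) : Set H))
    (h : ∀ i j, ⟪g' i, g' j⟫_ℂ = ⟪g j, g i⟫_ℂ) :
    ∃ C : H →L⋆[ℂ] H, (∀ i, C (g i) = g' i) ∧ ∀ u v, ⟪C u, C v⟫_ℂ = ⟪v, u⟫_ℂ := by
  set π := Finsupp.linearCombination ℂ g
  set κ := Finsupp.conjLinearCombination g'
  have hπ : DenseRange π := by
    rwa [DenseRange, ← LinearMap.coe_range, Finsupp.range_linearCombination]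
  have hC : ∀ f, κ.extendOfNorm π (π f) = κ f :=
    LinearMap.extendOfNorm_eq hπ
      ⟨1, fun f => by rw [one_mul, Finsupp.norm_conjLinearCombination h]⟩
  refine ⟨κ.extendOfNorm π, fun i => ?_,
    hπ.induction_on₂ (isClosed_eq (by fun_prop) (by fun_prop)) fun f f' => ?_⟩
  · simpa [π, κ, Finsupp.conjLinearCombination_single] using hC (Finsupp.single i 1)
  · rw [hC, hC, Finsupp.inner_conjLinearCombination h]

theorem exists_isConjugation_apply_eq {g : ι → H} {τ : ι → ι} (hτ : Function.Involutive τ)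
    (hg : Dense (Submodule.span ℂ (Set.range g) : Set H))
    (h : ∀ i j, ⟪g (τ i), g (τ j)⟫_ℂ = ⟪g j, g i⟫_ℂ) :
    ∃ C : H →L⋆[ℂ] H, IsConjugation C ∧ ∀ i, C (g i) = g (τ i) := by
  obtain ⟨C, hCg, hC⟩ := exists_conjLinear_apply_eq_of_inner_eq hg h
  have hCC : C.comp C = ContinuousLinearMap.id ℂ H := by
    refine ContinuousLinearMap.ext_on hg ?_
    rintro _ ⟨i, rfl⟩
    simp [hCg, hτ i]
  exact ⟨C, ⟨fun u => congr($hCC u), hC⟩, hCg⟩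

end Extension

namespace LinearIsometryEquiv

variable (U : H ≃ₗᵢ[ℂ] H)

theorem zpow_apply_zpow_apply (m n : ℤ) (x : H) : (U ^ m) ((U ^ n) x) = (U ^ (m + n)) x := by
  rw [zpow_add, coe_mul, Function.comp_apply]

theorem inner_zpow_apply_left (k : ℤ) (x y : H) :
    ⟪(U ^ k) x, y⟫_ℂ = ⟪x, (U ^ (-k)) y⟫_ℂ := by
  rw [← (U ^ k).inner_map_map x, zpow_apply_zpow_apply, add_neg_cancel, zpow_zero, coe_one, id]

theorem inner_zpow_apply_zpow_apply (m n : ℤ) (x y : H) :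
    ⟪(U ^ m) x, (U ^ n) y⟫_ℂ = ⟪(U ^ (m - n)) x, y⟫_ℂ := by
  rw [inner_zpow_apply_left, zpow_apply_zpow_apply, inner_zpow_apply_left, neg_sub,
    sub_eq_neg_add]

def zpowFamily (F : Set H) (p : F × ℤ) : H := (U ^ p.2) p.1

theorem apply_zpowFamily {F : Set H} (e : F) (n : ℤ) :
    U (U.zpowFamily F (e, n)) = U.zpowFamily F (e, 1 + n) := by
  simpa [zpowFamily] using U.zpow_apply_zpow_apply 1 n e

theorem symm_apply_zpowFamily {F : Set H} (e : F) (n : ℤ) :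
    U.symm (U.zpowFamily F (e, n)) = U.zpowFamily F (e, -1 + n) := by
  simpa [zpowFamily] using U.zpow_apply_zpow_apply (-1) n e

theorem inner_zpowFamily_neg {F : Set H}
    (hF : F.Pairwise fun e e' => ∀ k : ℤ, ⟪(U ^ k) e, e'⟫_ℂ = 0) (p q : F × ℤ) :
    ⟪U.zpowFamily F (p.1, -p.2), U.zpowFamily F (q.1, -q.2)⟫_ℂ =
      ⟪U.zpowFamily F q, U.zpowFamily F p⟫_ℂ := by
  simp only [zpowFamily, inner_zpow_apply_zpow_apply, neg_sub_neg]
  by_cases hpq : p.1 = q.1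
  · rw [hpq]
  · rw [hF p.1.2 q.1.2 (Subtype.coe_ne_coe.mpr hpq),
      hF q.1.2 p.1.2 (Subtype.coe_ne_coe.mpr (Ne.symm hpq))]

variable [CompleteSpace H]

theorem exists_pairwise_orthogonal_dense_span_zpowFamily :
    ∃ F : Set H, F.Pairwise (fun e e' => ∀ k : ℤ, ⟪(U ^ k) e, e'⟫_ℂ = 0) ∧
      Dense (Submodule.span ℂ (Set.range (U.zpowFamily F)) : Set H) := by
  obtain ⟨F, hF⟩ := zorn_subset
    {F : Set H | F.Pairwise fun e e' => ∀ k : ℤ, ⟪(U ^ k) e, e'⟫_ℂ = 0}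
    fun c hc hchain => ⟨⋃₀ c, (Set.pairwise_sUnion hchain.directedOn).2 hc,
      fun _ => Set.subset_sUnion_of_mem⟩
  refine ⟨F, hF.prop, ?_⟩
  set V := Submodule.span ℂ (Set.range (U.zpowFamily F))
  have hV : ∀ e ∈ F, ∀ k : ℤ, (U ^ k) e ∈ V := fun e he k =>
    Submodule.subset_span ⟨(⟨e, he⟩, k), rfl⟩
  rw [Submodule.dense_iff_topologicalClosure_eq_top, Submodule.topologicalClosure_eq_top_iff,
    Submodule.eq_bot_iff]
  intro x hx
  have hxF : insert x F ∈
      {F : Set H | F.Pairwise fun e e' => ∀ k : ℤ, ⟪(U ^ k) e, e'⟫_ℂ = 0} :=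
    hF.prop.insert fun e he _ =>
      ⟨fun k => by
        rw [inner_zpow_apply_left]
        exact Submodule.inner_left_of_mem_orthogonal (hV e he _) hx,
      fun k => Submodule.inner_right_of_mem_orthogonal (hV e he k) hx⟩
  have hxV : x ∈ V := by simpa using hV x (hF.mem_of_prop_insert hxF) 0
  exact inner_self_eq_zero.mp (Submodule.inner_right_of_mem_orthogonal hxV hx)

theorem exists_isConjugation_intertwining_symm :
    ∃ C : H →L⋆[ℂ] H, IsConjugation C ∧ ∀ u, C (U u) = U.symm (C u) := by
  obtain ⟨F, hF, hdense⟩ := U.exists_pairwise_orthogonal_dense_span_zpowFamily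
  obtain ⟨C, hC, hCg⟩ := exists_isConjugation_apply_eq (τ := fun p : F × ℤ => (p.1, -p.2))
    (fun p => by simp) hdense (U.inner_zpowFamily_neg hF)
  have hCU : C.comp (U : H →L[ℂ] H) = (U.symm : H →L[ℂ] H).comp C := by
    refine ContinuousLinearMap.ext_on hdense ?_
    rintro _ ⟨⟨e, n⟩, rfl⟩
    change C (U (U.zpowFamily F (e, n))) = U.symm (C (U.zpowFamily F (e, n)))
    rw [apply_zpowFamily, hCg, hCg, symm_apply_zpowFamily, neg_add]
  exact ⟨C, hC, fun u => congr($hCU u)⟩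

end LinearIsometryEquiv

theorem stmt13_general (H : Type) [NormedAddCommGroup H] [InnerProductSpace ℂ H] [CompleteSpace H]
    (U : H ≃ₗᵢ[ℂ] H) :
    ∃ K L : H → H,
      (∀ u v, K (u + v) = K u + K v) ∧
      (∀ (a : ℂ) u, K (a • u) = (starRingEnd ℂ) a • K u) ∧
      (∀ u, K (K u) = u) ∧
      (∀ u v, (inner ℂ (K u) (K v) : ℂ) = inner ℂ v u) ∧
      (∀ u v, L (u + v) = L u + L v) ∧
      (∀ (a : ℂ) u, L (a • u) = (starRingEnd ℂ) a • L u) ∧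
      (∀ u, L (L u) = u) ∧
      (∀ u v, (inner ℂ (L u) (L v) : ℂ) = inner ℂ v u) ∧
      (∀ u, U u = K (L u)) := by
  obtain ⟨L, hL, hLU⟩ := U.exists_isConjugation_intertwining_symm
  have hK := hL.comp_unitary U hLU
  exact ⟨_, L, map_add _, map_smulₛₗ _, hK.involutive, hK.inner_map_map, map_add L,
    map_smulₛₗ L, hL.involutive, hL.inner_map_map, fun u => by simp [hL.involutive]⟩

/-- Godič–Lucenko: Every unitary operator `U` on a separable complex Hilbert
space can be written as a product `U = K ∘ L` of two conjugations (antilinear involutive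
isometries). -/
theorem stmt13 (H : Type) [NormedAddCommGroup H] [InnerProductSpace ℂ H] [CompleteSpace H]
    [TopologicalSpace.SeparableSpace H]
    (U : H ≃ₗᵢ[ℂ] H) :
    ∃ K L : H → H,
      (∀ u v, K (u + v) = K u + K v) ∧
      (∀ (a : ℂ) u, K (a • u) = (starRingEnd ℂ) a • K u) ∧
      (∀ u, K (K u) = u) ∧
      (∀ u v, (inner ℂ (K u) (K v) : ℂ) = inner ℂ v u) ∧
      (∀ u v, L (u + v) = L u + L v) ∧
      (∀ (a : ℂ) u, L (a • u) = (starRingEnd ℂ) a • L u) ∧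
      (∀ u, L (L u) = u) ∧
      (∀ u v, (inner ℂ (L u) (L v) : ℂ) = inner ℂ v u) ∧
      (∀ u, U u = K (L u)) :=
  stmt13_general H U
end
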